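/- arXiv:2403.18670 — 2 statements merged into one kernel-verified Lean document; each statement's English description precedes it below -/
import Mathlib

section
/- Let C ⊆ ℝ^d be a closed cone, κ ∈ ℝ^d, and Λ ⊆ (ℤ^d + κ) ∩ C. Let 𝚍 > 0 and let h_L : ℝ^d → ℝ be continuous and homogeneous of degree 𝚍 at infinity, i.e. there exists R > 0 such that h_L(λa) = λ^𝚍 h_L(a) for all λ > 1 and all ‖a‖ ≥ R. Assume moreover that h_L(a) > 0 for every a ∈ C with ‖a‖ ≥ R. Then there exists a constant C' > 0 such that for every E ≥ 1 the cardinality of the set {a ∈ Λ : h_L(a) ≤ E} is at most C' E^{d/𝚍}. -/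
/-!
On the cone `C`, the minimum `m > 0` of `h_L` on the sphere of radius `R` and homogeneity give
`h_L a ≥ m (‖a‖ / R) ^ dd` for `‖a‖ > R`, so `h_L a ≤ E` confines `a` to a ball of radius
`c E ^ (1 / dd)`. A ball of radius `r` contains at most `(2 (r + ‖κ‖) + 1) ^ d` points of
`ℤ^d + κ`, since their integer parts lie in a cube of that side length.
-/

open Metric

def translatedLattice {ι : Type*} (κ : EuclideanSpace ℝ ι) : Set (EuclideanSpace ℝ ι) :=
  {x | ∃ k : ι → ℤ, ∀ i, x i = (k i : ℝ) + κ i}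

theorem Int.card_Icc_neg_floor_floor_le {ρ : ℝ} (hρ : 0 ≤ ρ) :
    ((Finset.Icc (-⌊ρ⌋) ⌊ρ⌋).card : ℝ) ≤ 2 * ρ + 1 := by
  have hfloor : 0 ≤ ⌊ρ⌋ := Int.floor_nonneg.mpr hρ
  have hcard : ((Finset.Icc (-⌊ρ⌋) ⌊ρ⌋).card : ℤ) = 2 * ⌊ρ⌋ + 1 := by
    rw [Int.card_Icc]; omega
  have : ((Finset.Icc (-⌊ρ⌋) ⌊ρ⌋).card : ℝ) = 2 * ⌊ρ⌋ + 1 := by exact_mod_cast hcard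
  linarith [Int.floor_le ρ]

section Lattice

variable {ι : Type*} [Fintype ι]

theorem translatedLattice_inter_closedBall_subset (κ : EuclideanSpace ℝ ι) (r : ℝ) :
    translatedLattice κ ∩ closedBall 0 r ⊆
      (fun k : ι → ℤ => WithLp.toLp 2 (fun i => (k i : ℝ) + κ i)) ''
        Set.Icc (fun _ => -⌊r + ‖κ‖⌋) (fun _ => ⌊r + ‖κ‖⌋) := by
  rintro x ⟨⟨k, hk⟩, hx⟩
  refine ⟨k, ?_, PiLp.ext fun i => (hk i).symm⟩
  have hki : ∀ i, |(k i : ℝ)| ≤ r + ‖κ‖ := fun i => calc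
    |(k i : ℝ)| = ‖x i - κ i‖ := by rw [hk i, add_sub_cancel_right, Real.norm_eq_abs]
    _ ≤ ‖x i‖ + ‖κ i‖ := norm_sub_le _ _
    _ ≤ r + ‖κ‖ := add_le_add ((PiLp.norm_apply_le x i).trans (mem_closedBall_zero_iff.mp hx))
        (PiLp.norm_apply_le κ i)
  exact ⟨fun i => neg_le.mpr (Int.le_floor.mpr (by push_cast; linarith [(abs_le.mp (hki i)).1])),
    fun i => Int.le_floor.mpr (abs_le.mp (hki i)).2⟩

theorem translatedLattice_inter_closedBall_finite (κ : EuclideanSpace ℝ ι) (r : ℝ) :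
    (translatedLattice κ ∩ closedBall 0 r).Finite := by
  classical
  exact ((Set.finite_Icc _ _).image _).subset (translatedLattice_inter_closedBall_subset κ r)

theorem ncard_translatedLattice_inter_closedBall_le (κ : EuclideanSpace ℝ ι) {r : ℝ}
    (hr : 0 ≤ r) :
    ((translatedLattice κ ∩ closedBall 0 r).ncard : ℝ) ≤ (2 * (r + ‖κ‖) + 1) ^ Fintype.card ι := by
  classical
  have hcard : (translatedLattice κ ∩ closedBall 0 r).ncard ≤
      (Finset.Icc (-⌊r + ‖κ‖⌋) ⌊r + ‖κ‖⌋).card ^ Fintype.card ι := calc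
    _ ≤ _ := Set.ncard_le_ncard (translatedLattice_inter_closedBall_subset κ r)
        ((Set.finite_Icc _ _).image _)
    _ ≤ _ := Set.ncard_image_le (Set.finite_Icc _ _)
    _ = _ := by
      rw [← Finset.coe_Icc, Set.ncard_coe_finset, Pi.card_Icc, Finset.prod_const,
        Finset.card_univ]
  calc _ ≤ ((Finset.Icc (-⌊r + ‖κ‖⌋) ⌊r + ‖κ‖⌋).card : ℝ) ^ Fintype.card ι := by
        exact_mod_cast hcard
    _ ≤ _ := pow_le_pow_left₀ (Nat.cast_nonneg _)
        (Int.card_Icc_neg_floor_floor_le (by positivity)) _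

end Lattice

section Cone

variable {V : Type*} [NormedAddCommGroup V] [NormedSpace ℝ V] {C : Set V} {h : V → ℝ}
  {dd R m : ℝ}

theorem mul_rpow_le_of_homogeneous (hCcone : ∀ x ∈ C, ∀ t : ℝ, 0 ≤ t → t • x ∈ C)
    (hR : 0 < R) (hhom : ∀ a : V, R ≤ ‖a‖ → ∀ lam : ℝ, 1 < lam → h (lam • a) = lam ^ dd * h a)
    (hm : ∀ b ∈ C ∩ sphere 0 R, m ≤ h b) {a : V} (ha : a ∈ C) (haR : R < ‖a‖) :
    m * (‖a‖ / R) ^ dd ≤ h a := by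
  have ha0 : 0 < ‖a‖ := hR.trans haR
  set b := (R / ‖a‖) • a
  have hb : b ∈ C ∩ sphere 0 R := by
    refine ⟨hCcone a ha _ (by positivity), mem_sphere_zero_iff_norm.mpr ?_⟩
    rw [norm_smul, Real.norm_of_nonneg (by positivity), div_mul_cancel₀ _ ha0.ne']
  have hab : (‖a‖ / R) • b = a := by
    rw [smul_smul, div_mul_div_cancel₀ hR.ne', div_self ha0.ne', one_smul]
  have hbR : R ≤ ‖b‖ := (mem_sphere_zero_iff_norm.mp hb.2).ge
  calc m * (‖a‖ / R) ^ dd ≤ h b * (‖a‖ / R) ^ dd := by gcongr; exact hm b hb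
    _ = h ((‖a‖ / R) • b) := by rw [hhom b hbR _ ((one_lt_div hR).mpr haR), mul_comm]
    _ = h a := by rw [hab]

theorem exists_norm_le_mul_rpow_of_homogeneous [ProperSpace V] (hC : IsClosed C)
    (hCcone : ∀ x ∈ C, ∀ t : ℝ, 0 ≤ t → t • x ∈ C) (hdd : 0 < dd) (hR : 0 < R)
    (hcont : ContinuousOn h (C ∩ sphere 0 R))
    (hhom : ∀ a : V, R ≤ ‖a‖ → ∀ lam : ℝ, 1 < lam → h (lam • a) = lam ^ dd * h a)
    (hpos : ∀ a ∈ C, R ≤ ‖a‖ → 0 < h a) :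
    ∃ c > 0, ∀ E : ℝ, 1 ≤ E → {a ∈ C | h a ≤ E} ⊆ closedBall 0 (c * E ^ dd⁻¹) := by
  obtain ⟨m, hm0, hm⟩ := (isCompact_sphere (0 : V) R).inter_left hC |>.exists_forall_le' hcont
    fun b hb => hpos b hb.1 (mem_sphere_zero_iff_norm.mp hb.2).ge
  refine ⟨R + R / m ^ dd⁻¹, by positivity, fun E hE a ⟨ha, haE⟩ => mem_closedBall_zero_iff.mpr ?_⟩
  have hE1 : 1 ≤ E ^ dd⁻¹ := Real.one_le_rpow hE (by positivity)
  rcases le_or_gt ‖a‖ R with haR | haR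
  · calc ‖a‖ ≤ R * 1 := by linarith
      _ ≤ (R + R / m ^ dd⁻¹) * E ^ dd⁻¹ := by gcongr; linarith [show 0 ≤ R / m ^ dd⁻¹ by positivity]
  · have hpow : (‖a‖ / R) ^ dd ≤ E / m := by
      rw [le_div_iff₀' hm0]; exact (mul_rpow_le_of_homogeneous hCcone hR hhom hm ha haR).trans haE
    have hratio : ‖a‖ / R ≤ E ^ dd⁻¹ / m ^ dd⁻¹ := by
      rw [← Real.div_rpow (by linarith) hm0.le, Real.le_rpow_inv_iff_of_pos (by positivity)
        (by positivity) hdd]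
      exact hpow
    calc ‖a‖ = R * (‖a‖ / R) := by field_simp
      _ ≤ R * (E ^ dd⁻¹ / m ^ dd⁻¹) := by gcongr
      _ = R / m ^ dd⁻¹ * E ^ dd⁻¹ := by ring
      _ ≤ (R + R / m ^ dd⁻¹) * E ^ dd⁻¹ := by gcongr; linarith

end Cone

/-- Counting estimate for the eigenvalues of a globally integrable quantum system:
if `Λ ⊆ (ℤ^d + κ) ∩ C` and `h_L` is continuous, homogeneous of degree `dd > 0` at infinity
and positive on the cone `C` at infinity, then the number of points `a ∈ Λ` with
`h_L(a) ≤ E` is bounded by `C' E^{d/dd}` for all `E ≥ 1`. -/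
theorem counting_estimate {d : ℕ}
    (C : Set (EuclideanSpace ℝ (Fin d))) (hCclosed : IsClosed C)
    (hCcone : ∀ x ∈ C, ∀ t : ℝ, 0 ≤ t → t • x ∈ C)
    (κ : EuclideanSpace ℝ (Fin d))
    (Λ : Set (EuclideanSpace ℝ (Fin d)))
    (hΛ : Λ ⊆ {x : EuclideanSpace ℝ (Fin d) |
      ∃ k : Fin d → ℤ, ∀ i, x i = (k i : ℝ) + κ i} ∩ C)
    (dd : ℝ) (hdd : 0 < dd)
    (hL : EuclideanSpace ℝ (Fin d) → ℝ) (hLcont : Continuous hL)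
    (R : ℝ) (hR : 0 < R)
    (hhom : ∀ a : EuclideanSpace ℝ (Fin d), R ≤ ‖a‖ →
      ∀ lam : ℝ, 1 < lam → hL (lam • a) = lam ^ dd * hL a)
    (hpos : ∀ a ∈ C, R ≤ ‖a‖ → 0 < hL a) :
    ∃ C' > (0 : ℝ), ∀ E : ℝ, 1 ≤ E →
      ∃ hfin : {a ∈ Λ | hL a ≤ E}.Finite,
        (hfin.toFinset.card : ℝ) ≤ C' * E ^ ((d : ℝ) / dd) := by
  obtain ⟨c, hc0, hc⟩ := exists_norm_le_mul_rpow_of_homogeneous hCclosed hCcone hdd hR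
    hLcont.continuousOn hhom hpos
  refine ⟨(2 * (c + ‖κ‖) + 1) ^ d, by positivity, fun E hE => ?_⟩
  have hsub : {a ∈ Λ | hL a ≤ E} ⊆ translatedLattice κ ∩ closedBall 0 (c * E ^ dd⁻¹) :=
    fun a ⟨ha, haE⟩ => ⟨(hΛ ha).1, hc E hE ⟨(hΛ ha).2, haE⟩⟩
  have hfin := (translatedLattice_inter_closedBall_finite κ _).subset hsub
  refine ⟨hfin, ?_⟩
  have hE1 : 1 ≤ E ^ dd⁻¹ := Real.one_le_rpow hE (by positivity)
  rw [← Set.ncard_eq_toFinset_card _ hfin]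
  calc ({a ∈ Λ | hL a ≤ E}.ncard : ℝ)
      ≤ (translatedLattice κ ∩ closedBall 0 (c * E ^ dd⁻¹)).ncard := by
        exact_mod_cast Set.ncard_le_ncard hsub (translatedLattice_inter_closedBall_finite κ _)
    _ ≤ (2 * (c * E ^ dd⁻¹ + ‖κ‖) + 1) ^ d := by
        simpa using ncard_translatedLattice_inter_closedBall_le κ (by positivity)
    _ ≤ ((2 * (c + ‖κ‖) + 1) * E ^ dd⁻¹) ^ d := by
        gcongr; nlinarith [norm_nonneg κ]
    _ = (2 * (c + ‖κ‖) + 1) ^ d * E ^ ((d : ℝ) / dd) := by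
        rw [mul_pow, ← Real.rpow_natCast (E ^ dd⁻¹), ← Real.rpow_mul (by linarith), inv_mul_eq_div]
end

section
/- Fix an integer ℓ ≥ 1, let a_1(E, M) be the modified radial action of the two-dimensional anharmonic oscillator (extended analytically to the region Ω := {(E, M) : E > 0, |M| < ((2ℓ/(ℓ+1)) E)^{(ℓ+1)/(2ℓ)}}), and define the cone 𝒞 := {(a_1, a_2) ∈ ℝ² : a_1 ≥ 0 if a_2 ≥ 0, and a_1 ≥ |a_2| if a_2 < 0}. Then the map (E, M) ↦ (a_1(E, M), M) sends Ω into the interior of 𝒞, and there exists a function h, real analytic on the interior of 𝒞 and homogeneous of degree 2ℓ/(ℓ+1) there (i.e. h(λ a) = λ^{2ℓ/(ℓ+1)} h(a) for all λ > 0 and all a in the interior of 𝒞), such that h(a_1(E, M), M) = E for all (E, M) ∈ Ω. -/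
/-!
On `Ω` the energy exceeds `Vmin M`, the minimum of the effective potential, and off the axis
`M = 0` the modified action is `a₁ = a_r + max 0 (-M)`; every estimate proved for `M ≠ 0` reaches
the axis by continuity of `a₁`. Comparing the radial integrands at energies `E ≤ t` over a window
of allowed radii that is uniform in `M` gives `a₁(t, M) ≥ a₁(E, M) + w (√t - √E)` with `w > 0`, so
`E ↦ a₁(E, M)` is strictly increasing and unbounded with positive derivative, while
`a_r ≤ C √(E - Vmin M)` sends it down to `max 0 (-M)` at the bottom of the fibre. By the
intermediate value theorem `(E, M) ↦ (a₁, M)` is then a bijection of `Ω` onto the open cone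
`{a₁ > max 0 (-a₂)}`; its inverse is analytic by the analytic inverse function theorem, and the
scaling `a₁(ρ^{2ℓ} E, ρ^{ℓ+1} M) = ρ^{ℓ+1} a₁(E, M)` of the radial integral makes its energy
component homogeneous of degree `2ℓ/(ℓ+1)`.
-/

/-- The effective radial potential of the two-dimensional anharmonic oscillator at angular
momentum `M`: `V*_M(r) = M²/(2r²) + r^{2ℓ}/(2ℓ)`. -/
noncomputable def Vstar (ℓ : ℕ) (M r : ℝ) : ℝ :=
  M ^ 2 / (2 * r ^ 2) + r ^ (2 * ℓ) / (2 * ℓ)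

/-- The inner turning point `r_m` of the radial motion at energy `E` and angular
momentum `M` (equal to `0` when `M = 0`). -/
noncomputable def rmin (ℓ : ℕ) (E M : ℝ) : ℝ :=
  sInf {r : ℝ | 0 < r ∧ Vstar ℓ M r ≤ E}

/-- The outer turning point `r_M` of the radial motion at energy `E` and angular
momentum `M`. -/
noncomputable def rmax (ℓ : ℕ) (E M : ℝ) : ℝ :=
  sSup {r : ℝ | 0 < r ∧ Vstar ℓ M r ≤ E}

/-- The radial action `a_r(E, M) = (√2/π) ∫_{r_m}^{r_M} √(E − V*_M(r)) dr` of the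
two-dimensional anharmonic oscillator. -/
noncomputable def radialAction (ℓ : ℕ) (E M : ℝ) : ℝ :=
  (Real.sqrt 2 / Real.pi) * ∫ r in (rmin ℓ E M)..(rmax ℓ E M), Real.sqrt (E - Vstar ℓ M r)

/-- The region `Ω = {(E, M) : E > 0, |M| < ((2ℓ/(ℓ+1)) E)^{(ℓ+1)/(2ℓ)}}` where the
action variables of the anharmonic oscillator are defined. -/
def OmegaRegion (ℓ : ℕ) : Set (ℝ × ℝ) :=
  {p : ℝ × ℝ | 0 < p.1 ∧
    |p.2| < (2 * (ℓ : ℝ) / (ℓ + 1) * p.1) ^ (((ℓ : ℝ) + 1) / (2 * ℓ))}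

/-- The cone `𝒞 = {(a₁, a₂) : a₁ ≥ 0 if a₂ ≥ 0, a₁ ≥ |a₂| if a₂ < 0}`. -/
def actionCone : Set (ℝ × ℝ) :=
  {a : ℝ × ℝ | (0 ≤ a.2 → 0 ≤ a.1) ∧ (a.2 < 0 → |a.2| ≤ a.1)}

open Real Set Filter Topology MeasureTheory Pointwise

theorem le_of_eventually_nhdsNE {X β : Type*} [TopologicalSpace X] [TopologicalSpace β]
    [Preorder β] [OrderClosedTopology β] {f g : X → β} {x : X} [(𝓝[≠] x).NeBot]
    (hf : ContinuousAt f x) (hg : ContinuousAt g x) (h : ∀ᶠ y in 𝓝[≠] x, f y ≤ g y) :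
    f x ≤ g x :=
  le_of_tendsto_of_tendsto (hf.mono_left nhdsWithin_le_nhds) (hg.mono_left nhdsWithin_le_nhds) h

theorem Real.sqrt_sub_sqrt_le_sqrt_sub_sub_sqrt_sub {V E t : ℝ} (hV : 0 ≤ V) (hVE : V ≤ E)
    (hEt : E ≤ t) : √t - √E ≤ √(t - V) - √(E - V) := by
  -- concavity of `√`: the increment over `[E - V, t - V]` beats the one over `[E, t]`
  have hcross : √t * √(E - V) ≤ √(t - V) * √E := by
    rw [← Real.sqrt_mul (by linarith), ← Real.sqrt_mul (by linarith)]
    exact Real.sqrt_le_sqrt (by nlinarith)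
  have : √t + √(E - V) ≤ √(t - V) + √E := by
    refine (pow_le_pow_iff_left₀ (by positivity) (by positivity) two_ne_zero).mp ?_
    nlinarith [Real.sq_sqrt (show 0 ≤ t by linarith), Real.sq_sqrt (show 0 ≤ E by linarith),
      Real.sq_sqrt (show 0 ≤ t - V by linarith), Real.sq_sqrt (show 0 ≤ E - V by linarith)]
  linarith

namespace AnharmonicOscillator

variable {ℓ : ℕ}

/-- The minimum of `Vstar ℓ M` on `r > 0`, attained at `r = |M| ^ (1 / (ℓ + 1))`. -/
noncomputable def Vmin (ℓ : ℕ) (M : ℝ) : ℝ :=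
  (ℓ + 1) / (2 * ℓ) * |M| ^ (2 * (ℓ : ℝ) / (ℓ + 1))

theorem Vmin_nonneg (M : ℝ) : 0 ≤ Vmin ℓ M := by
  unfold Vmin
  positivity

theorem continuous_Vmin (hℓ : 0 < ℓ) : Continuous (Vmin ℓ) :=
  continuous_const.mul (continuous_abs.rpow_const fun _ => Or.inr (by positivity))

theorem Vmin_le_Vstar (hℓ : 0 < ℓ) (M : ℝ) {r : ℝ} (hr : 0 < r) : Vmin ℓ M ≤ Vstar ℓ M r := by
  have hℓ' : (0 : ℝ) < ℓ := Nat.cast_pos.mpr hℓ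
  set γ : ℝ := 2 * ℓ / (ℓ + 1)
  have hw : 1 / ((ℓ : ℝ) + 1) + ℓ / (ℓ + 1) = 1 := by field_simp; ring
  -- weighted AM-GM for `r ^ (2ℓ)` and `M² / r²` with weights `1 / (ℓ + 1)` and `ℓ / (ℓ + 1)`
  have hamgm := Real.geom_mean_le_arith_mean2_weighted (p₁ := r ^ (2 * ℓ)) (p₂ := M ^ 2 / r ^ 2)
    (by positivity) (by positivity) (by positivity) (by positivity) hw
  have hgeom : (r ^ (2 * ℓ)) ^ (1 / ((ℓ : ℝ) + 1)) * (M ^ 2 / r ^ 2) ^ ((ℓ : ℝ) / (ℓ + 1)) =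
      |M| ^ γ := by
    rw [Real.div_rpow (by positivity) (by positivity), ← sq_abs M]
    simp only [← Real.rpow_natCast, ← Real.rpow_mul hr.le, ← Real.rpow_mul (abs_nonneg M)]
    have hrγ : 0 < r ^ γ := Real.rpow_pos_of_pos hr γ
    push_cast
    rw [show 2 * (ℓ : ℝ) * (1 / (ℓ + 1)) = γ by ring, show 2 * ((ℓ : ℝ) / (ℓ + 1)) = γ by ring]
    field_simp
  have harith : Vstar ℓ M r =
      (ℓ + 1) / (2 * ℓ) * (1 / ((ℓ : ℝ) + 1) * r ^ (2 * ℓ) + ℓ / (ℓ + 1) * (M ^ 2 / r ^ 2)) := by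
    unfold Vstar
    field_simp
    ring
  rw [harith, Vmin, ← hgeom]
  exact mul_le_mul_of_nonneg_left hamgm (by positivity)

theorem Vstar_eq_Vmin (hℓ : 0 < ℓ) {M : ℝ} (hM : M ≠ 0) :
    Vstar ℓ M (|M| ^ (1 / ((ℓ : ℝ) + 1))) = Vmin ℓ M := by
  have hℓ' : (0 : ℝ) < ℓ := Nat.cast_pos.mpr hℓ
  have hMpos : 0 < |M| := abs_pos.mpr hM
  unfold Vstar Vmin
  rw [← sq_abs M]
  simp only [← Real.rpow_natCast, ← Real.rpow_mul (abs_nonneg M)]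
  push_cast
  have h2 : |M| ^ (2 : ℝ) = |M| ^ (2 * (ℓ : ℝ) / (ℓ + 1)) * |M| ^ (1 / ((ℓ : ℝ) + 1) * 2) := by
    rw [← Real.rpow_add hMpos]
    congr 1
    field_simp
  have hpos : 0 < |M| ^ (1 / ((ℓ : ℝ) + 1) * 2) := Real.rpow_pos_of_pos hMpos _
  rw [h2, show 1 / ((ℓ : ℝ) + 1) * (2 * ℓ) = 2 * ℓ / (ℓ + 1) by ring]
  field_simp

theorem mem_omegaRegion_iff (hℓ : 0 < ℓ) {p : ℝ × ℝ} : p ∈ OmegaRegion ℓ ↔ Vmin ℓ p.2 < p.1 := by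
  obtain ⟨E, M⟩ := p
  have hγ : (0 : ℝ) < 2 * ℓ / (ℓ + 1) := by positivity
  have hβ : ((ℓ : ℝ) + 1) / (2 * ℓ) = (2 * ℓ / (ℓ + 1) : ℝ)⁻¹ := (inv_div _ _).symm
  show 0 < E ∧ |M| < (2 * ℓ / (ℓ + 1) * E) ^ (((ℓ : ℝ) + 1) / (2 * ℓ)) ↔ _
  rw [Vmin, hβ, ← div_eq_inv_mul, div_lt_iff₀ hγ]
  constructor
  · rintro ⟨hE, hM⟩
    rw [Real.lt_rpow_inv_iff_of_pos (abs_nonneg M) (by positivity) hγ] at hM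
    linarith
  · intro h
    have hE : 0 < E := pos_of_mul_pos_left ((by positivity : (0 : ℝ) ≤ _).trans_lt h) hγ.le
    rw [Real.lt_rpow_inv_iff_of_pos (abs_nonneg M) (by positivity) hγ]
    exact ⟨hE, by linarith⟩

theorem isOpen_omegaRegion (hℓ : 0 < ℓ) : IsOpen (OmegaRegion ℓ) := by
  have : OmegaRegion ℓ = {p : ℝ × ℝ | Vmin ℓ p.2 < p.1} := Set.ext fun _ => mem_omegaRegion_iff hℓ
  rw [this]
  exact isOpen_lt ((continuous_Vmin hℓ).comp continuous_snd) continuous_fst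

theorem exists_Vstar_lt (hℓ : 0 < ℓ) {E M : ℝ} (h : Vmin ℓ M < E) :
    ∃ r, 0 < r ∧ Vstar ℓ M r < E := by
  rcases eq_or_ne M 0 with rfl | hM
  · have hcont : Continuous (Vstar ℓ 0) := by
      have : Vstar ℓ 0 = fun r : ℝ => r ^ (2 * ℓ) / (2 * ℓ) := by funext r; simp [Vstar]
      rw [this]
      fun_prop
    have hE : Vstar ℓ 0 0 < E := by simpa [Vstar, hℓ.ne'] using (Vmin_nonneg 0).trans_lt h
    have hnear : ∀ᶠ r in 𝓝[>] (0 : ℝ), Vstar ℓ 0 r < E :=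
      nhdsWithin_le_nhds ((hcont.tendsto 0).eventually (gt_mem_nhds hE))
    exact (eventually_mem_nhdsWithin.and hnear).exists
  · exact ⟨_, Real.rpow_pos_of_pos (abs_pos.mpr hM) _, (Vstar_eq_Vmin hℓ hM).trans_lt h⟩

theorem continuousAt_Vstar {M r : ℝ} (hr : r ≠ 0) :
    ContinuousAt (fun x : ℝ × ℝ => Vstar ℓ x.1 x.2) (M, r) := by
  unfold Vstar
  fun_prop (disch := positivity)

theorem exists_Icc_eventually_Vstar_le (hℓ : 0 < ℓ) {E M : ℝ} (h : Vmin ℓ M < E) :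
    ∃ u v, 0 < u ∧ u < v ∧ ∀ᶠ M' in 𝓝 M, ∀ r ∈ Icc u v, Vstar ℓ M' r ≤ E := by
  obtain ⟨r₁, hr₁, hlt⟩ := exists_Vstar_lt hℓ h
  obtain ⟨U, hU, R, hR, hUR⟩ := mem_nhds_prod_iff.mp
    ((continuousAt_Vstar (M := M) hr₁.ne').preimage_mem_nhds (Iio_mem_nhds hlt))
  obtain ⟨ε, hε, hball⟩ := Metric.mem_nhds_iff.mp hR
  refine ⟨r₁, r₁ + ε / 2, hr₁, by linarith, ?_⟩
  filter_upwards [hU] with M' hM' r hr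
  have hrR : r ∈ R := hball <| by
    rw [Real.ball_eq_Ioo]
    constructor <;> linarith [hr.1, hr.2]
  exact le_of_lt (hUR (mk_mem_prod hM' hrR))

theorem Vstar_scale (hℓ : 0 < ℓ) {ρ : ℝ} (hρ : ρ ≠ 0) (M r : ℝ) :
    Vstar ℓ (ρ ^ (ℓ + 1) * M) (ρ * r) = ρ ^ (2 * ℓ) * Vstar ℓ M r := by
  rcases eq_or_ne r 0 with rfl | hr
  · simp [Vstar, hℓ.ne']
  unfold Vstar
  field_simp
  ring

theorem Vmin_scale {ρ : ℝ} (hρ : 0 < ρ) (M : ℝ) :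
    Vmin ℓ (ρ ^ (ℓ + 1) * M) = ρ ^ (2 * ℓ) * Vmin ℓ M := by
  unfold Vmin
  rw [abs_mul, abs_pow, abs_of_pos hρ, Real.mul_rpow (by positivity) (abs_nonneg M),
    ← Real.rpow_natCast, ← Real.rpow_mul hρ.le, ← Real.rpow_natCast ρ (2 * ℓ)]
  push_cast
  rw [show ((ℓ : ℝ) + 1) * (2 * ℓ / (ℓ + 1)) = 2 * ℓ by field_simp]
  ring

def allowedRadii (ℓ : ℕ) (E M : ℝ) : Set ℝ := {r | 0 < r ∧ Vstar ℓ M r ≤ E}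

theorem allowedRadii_scale (hℓ : 0 < ℓ) {ρ : ℝ} (hρ : 0 < ρ) (E M : ℝ) :
    allowedRadii ℓ (ρ ^ (2 * ℓ) * E) (ρ ^ (ℓ + 1) * M) = ρ • allowedRadii ℓ E M := by
  ext r
  rw [Set.mem_smul_set_iff_inv_smul_mem₀ hρ.ne', smul_eq_mul]
  have hr : r = ρ * (ρ⁻¹ * r) := by field_simp
  simp only [allowedRadii, Set.mem_ofPred_eq]
  rw [hr, Vstar_scale hℓ hρ.ne', ← hr, mul_le_mul_iff_right₀ (by positivity)]
  simp [hρ]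

theorem rmin_scale (hℓ : 0 < ℓ) {ρ : ℝ} (hρ : 0 < ρ) (E M : ℝ) :
    rmin ℓ (ρ ^ (2 * ℓ) * E) (ρ ^ (ℓ + 1) * M) = ρ * rmin ℓ E M := by
  rw [rmin, ← allowedRadii, allowedRadii_scale hℓ hρ, Real.sInf_smul_of_nonneg hρ.le,
    smul_eq_mul, rmin, allowedRadii]

theorem rmax_scale (hℓ : 0 < ℓ) {ρ : ℝ} (hρ : 0 < ρ) (E M : ℝ) :
    rmax ℓ (ρ ^ (2 * ℓ) * E) (ρ ^ (ℓ + 1) * M) = ρ * rmax ℓ E M := by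
  rw [rmax, ← allowedRadii, allowedRadii_scale hℓ hρ, Real.sSup_smul_of_nonneg hρ.le,
    smul_eq_mul, rmax, allowedRadii]

theorem radialAction_scale (hℓ : 0 < ℓ) {ρ : ℝ} (hρ : 0 < ρ) (E M : ℝ) :
    radialAction ℓ (ρ ^ (2 * ℓ) * E) (ρ ^ (ℓ + 1) * M) = ρ ^ (ℓ + 1) * radialAction ℓ E M := by
  have hintegrand : ∀ r, √(ρ ^ (2 * ℓ) * E - Vstar ℓ (ρ ^ (ℓ + 1) * M) (ρ * r)) =
      ρ ^ ℓ * √(E - Vstar ℓ M r) := by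
    intro r
    rw [Vstar_scale hℓ hρ.ne', ← mul_sub, Real.sqrt_mul (by positivity), pow_mul',
      Real.sqrt_sq (by positivity)]
  unfold radialAction
  rw [rmin_scale hℓ hρ, rmax_scale hℓ hρ, ← intervalIntegral.smul_integral_comp_mul_left,
    smul_eq_mul]
  simp only [hintegrand, intervalIntegral.integral_const_mul]
  ring

section TurningPoints

variable {E M : ℝ}

theorem le_of_mem_allowedRadii (hℓ : 0 < ℓ) {r : ℝ} (hr : r ∈ allowedRadii ℓ E M) :
    r ≤ (2 * ℓ * E) ^ (1 / (2 * (ℓ : ℝ))) := by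
  have hℓ' : (0 : ℝ) < ℓ := Nat.cast_pos.mpr hℓ
  obtain ⟨hr0, hrE⟩ := hr
  have hpow : r ^ (2 * ℓ) ≤ 2 * ℓ * E := by
    have : 0 ≤ M ^ 2 / (2 * r ^ 2) := by positivity
    have : r ^ (2 * ℓ) / (2 * ℓ) ≤ E := by unfold Vstar at hrE; linarith
    rw [div_le_iff₀ (by positivity)] at this
    linarith
  calc r = (r ^ (2 * ℓ)) ^ (1 / (2 * (ℓ : ℝ))) := by
        rw [← Real.rpow_natCast, ← Real.rpow_mul hr0.le]
        push_cast
        rw [mul_one_div_cancel (by positivity), Real.rpow_one]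
    _ ≤ (2 * ℓ * E) ^ (1 / (2 * (ℓ : ℝ))) := by gcongr

theorem div_sqrt_le_of_mem_allowedRadii (hE : 0 < E) {r : ℝ} (hr : r ∈ allowedRadii ℓ E M) :
    |M| / √(2 * E) ≤ r := by
  obtain ⟨hr0, hrE⟩ := hr
  have : 0 ≤ r ^ (2 * ℓ) / (2 * ℓ) := by positivity
  have hsq : M ^ 2 / (2 * r ^ 2) ≤ E := by unfold Vstar at hrE; linarith
  rw [div_le_iff₀ (by positivity)] at hsq
  refine (pow_le_pow_iff_left₀ (by positivity) hr0.le two_ne_zero).mp ?_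
  rw [div_pow, sq_abs, Real.sq_sqrt (by positivity), div_le_iff₀ (by positivity)]
  linarith

theorem rmin_le {r : ℝ} (hr : r ∈ allowedRadii ℓ E M) : rmin ℓ E M ≤ r :=
  csInf_le ⟨0, fun _ hs => hs.1.le⟩ hr

theorem le_rmax (hℓ : 0 < ℓ) {r : ℝ} (hr : r ∈ allowedRadii ℓ E M) : r ≤ rmax ℓ E M :=
  le_csSup ⟨_, fun _ hs => le_of_mem_allowedRadii hℓ hs⟩ hr

variable (hℓ : 0 < ℓ) (h : Vmin ℓ M < E)
include hℓ h

theorem allowedRadii_nonempty : (allowedRadii ℓ E M).Nonempty :=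
  (exists_Vstar_lt hℓ h).imp fun _ hr => ⟨hr.1, hr.2.le⟩

theorem rmax_le : rmax ℓ E M ≤ (2 * ℓ * E) ^ (1 / (2 * (ℓ : ℝ))) :=
  csSup_le (allowedRadii_nonempty hℓ h) fun _ hs => le_of_mem_allowedRadii hℓ hs

theorem rmin_le_rmax : rmin ℓ E M ≤ rmax ℓ E M :=
  have ⟨_, hr⟩ := allowedRadii_nonempty hℓ h
  (rmin_le hr).trans (le_rmax hℓ hr)

theorem rmin_pos (hM : M ≠ 0) : 0 < rmin ℓ E M := by
  have hE : 0 < E := (Vmin_nonneg M).trans_lt h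
  refine lt_of_lt_of_le ?_ (le_csInf (allowedRadii_nonempty hℓ h)
    fun _ hr => div_sqrt_le_of_mem_allowedRadii hE hr)
  have := abs_pos.mpr hM
  positivity

end TurningPoints

section RadialAction

variable {E M : ℝ}

theorem intervalIntegrable_sqrt_sub_Vstar {a b : ℝ} (ha : 0 < a) (hb : 0 < b) :
    IntervalIntegrable (fun r => √(E - Vstar ℓ M r)) volume a b := by
  refine ContinuousOn.intervalIntegrable fun r hr => ContinuousAt.continuousWithinAt ?_
  have hr0 : r ≠ 0 := (lt_of_lt_of_le (lt_min ha hb) hr.1).ne'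
  unfold Vstar
  fun_prop (disch := positivity)

theorem rmin_anti (hℓ : 0 < ℓ) (h : Vmin ℓ M < E) {t : ℝ} (hEt : E ≤ t) :
    rmin ℓ t M ≤ rmin ℓ E M :=
  csInf_le_csInf ⟨0, fun _ hs => hs.1.le⟩ (allowedRadii_nonempty hℓ h)
    fun _ hr => ⟨hr.1, hr.2.trans hEt⟩

theorem rmax_mono (hℓ : 0 < ℓ) (h : Vmin ℓ M < E) {t : ℝ} (hEt : E ≤ t) :
    rmax ℓ E M ≤ rmax ℓ t M :=
  csSup_le_csSup ⟨_, fun _ hs => le_of_mem_allowedRadii hℓ hs⟩ (allowedRadii_nonempty hℓ h)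
    fun _ hr => ⟨hr.1, hr.2.trans hEt⟩

variable (hℓ : 0 < ℓ) (hM : M ≠ 0) (h : Vmin ℓ M < E)
include hℓ hM h

omit hM in
theorem radialAction_nonneg : 0 ≤ radialAction ℓ E M :=
  mul_nonneg (by positivity)
    (intervalIntegral.integral_nonneg (rmin_le_rmax hℓ h) fun _ _ => Real.sqrt_nonneg _)

theorem radialAction_le :
    radialAction ℓ E M ≤ √2 / π * ((2 * ℓ * E) ^ (1 / (2 * (ℓ : ℝ))) * √(E - Vmin ℓ M)) := by
  have hA := rmin_pos hℓ h hM
  have hAB := rmin_le_rmax hℓ h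
  have hintegrand : ∫ r in rmin ℓ E M..rmax ℓ E M, √(E - Vstar ℓ M r) ≤
      ∫ _ in rmin ℓ E M..rmax ℓ E M, √(E - Vmin ℓ M) :=
    intervalIntegral.integral_mono_on hAB
      (intervalIntegrable_sqrt_sub_Vstar hA (hA.trans_le hAB)) intervalIntegrable_const
      fun r hr => Real.sqrt_le_sqrt (by linarith [Vmin_le_Vstar hℓ M (hA.trans_le hr.1)])
  have hlength : rmax ℓ E M - rmin ℓ E M ≤ (2 * ℓ * E) ^ (1 / (2 * (ℓ : ℝ))) := by
    linarith [rmax_le hℓ h]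
  rw [intervalIntegral.integral_const, smul_eq_mul] at hintegrand
  unfold radialAction
  gcongr
  exact hintegrand.trans (by gcongr)

theorem radialAction_add_le {t u v : ℝ} (hEt : E ≤ t) (hu : 0 < u) (huv : u ≤ v)
    (hwin : ∀ r ∈ Icc u v, Vstar ℓ M r ≤ E) :
    radialAction ℓ E M + √2 / π * ((v - u) * (√t - √E)) ≤ radialAction ℓ t M := by
  set A := rmin ℓ E M
  set B := rmax ℓ E M
  have hA : 0 < A := rmin_pos hℓ h hM
  have hAB : A ≤ B := rmin_le_rmax hℓ h
  have hAu : A ≤ u := rmin_le ⟨hu, hwin u ⟨le_rfl, huv⟩⟩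
  have hvB : v ≤ B := le_rmax hℓ ⟨hu.trans_le huv, hwin v ⟨huv, le_rfl⟩⟩
  have ht : Vmin ℓ M < t := h.trans_le hEt
  set F := fun s r => √(s - Vstar ℓ M r)
  have hF : ∀ s, IntervalIntegrable (F s) volume A B := fun s =>
    intervalIntegrable_sqrt_sub_Vstar hA (hA.trans_le hAB)
  have hwindow : (v - u) * (√t - √E) ≤ ∫ r in u..v, (F t r - F E r) := by
    rw [← smul_eq_mul, ← intervalIntegral.integral_const]
    refine intervalIntegral.integral_mono_on huv intervalIntegrable_const
      ((intervalIntegrable_sqrt_sub_Vstar hu (hu.trans_le huv)).sub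
        (intervalIntegrable_sqrt_sub_Vstar hu (hu.trans_le huv))) fun r hr => ?_
    have hr0 : 0 < r := hu.trans_le hr.1
    exact Real.sqrt_sub_sqrt_le_sqrt_sub_sub_sqrt_sub ((Vmin_nonneg M).trans
      (Vmin_le_Vstar hℓ M hr0)) (hwin r hr) hEt
  have hgrowth : ∫ r in u..v, (F t r - F E r) ≤ ∫ r in A..B, (F t r - F E r) :=
    intervalIntegral.integral_mono_interval hAu huv hvB
      (Eventually.of_forall fun r => sub_nonneg.mpr (Real.sqrt_le_sqrt (by linarith)))
      ((hF t).sub (hF E))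
  have hwiden : ∫ r in A..B, F t r ≤ ∫ r in rmin ℓ t M..rmax ℓ t M, F t r :=
    intervalIntegral.integral_mono_interval (rmin_anti hℓ h hEt) hAB (rmax_mono hℓ h hEt)
      (Eventually.of_forall fun r => Real.sqrt_nonneg _)
      (intervalIntegrable_sqrt_sub_Vstar (rmin_pos hℓ ht hM)
        ((rmin_pos hℓ ht hM).trans_le (rmin_le_rmax hℓ ht)))
  rw [intervalIntegral.integral_sub (hF t) (hF E)] at hgrowth
  have hsum : (∫ r in A..B, F E r) + (v - u) * (√t - √E) ≤
      ∫ r in rmin ℓ t M..rmax ℓ t M, F t r := by linarith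
  unfold radialAction
  rw [← mul_add]
  gcongr

end RadialAction

def openActionCone : Set (ℝ × ℝ) := {a | max 0 (-a.2) < a.1}

theorem isOpen_openActionCone : IsOpen openActionCone :=
  isOpen_lt (by fun_prop) continuous_fst

theorem actionCone_eq : actionCone = {a : ℝ × ℝ | max 0 (-a.2) ≤ a.1} := by
  ext ⟨x, y⟩
  simp only [actionCone, Set.mem_ofPred_eq, max_le_iff]
  rcases le_or_gt 0 y with hy | hy
  · simp only [hy, not_lt.mpr hy, true_implies, false_implies, and_true]
    exact ⟨fun h => ⟨h, by linarith⟩, And.left⟩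
  · simp only [hy, not_le.mpr hy, true_implies, false_implies, abs_of_neg hy, true_and]
    exact ⟨fun h => ⟨by linarith, h⟩, And.right⟩

theorem interior_actionCone : interior actionCone = openActionCone := by
  rw [actionCone_eq]
  refine subset_antisymm (fun a ha => ?_)
    (interior_maximal (fun _ ha => le_of_lt (α := ℝ) ha) isOpen_openActionCone)
  have hcurve : Tendsto (fun ε : ℝ => (a.1 - ε, a.2)) (𝓝[>] 0) (𝓝 a) := by
    have : Continuous fun ε : ℝ => (a.1 - ε, a.2) := by fun_prop
    simpa using (this.tendsto 0).mono_left nhdsWithin_le_nhds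
  obtain ⟨ε, hmem, hε⟩ :=
    ((hcurve.eventually (mem_interior_iff_mem_nhds.mp ha)).and self_mem_nhdsWithin).exists
  exact lt_of_le_of_lt hmem (sub_lt_self _ hε)

def actionMap (a1 : ℝ × ℝ → ℝ) (p : ℝ × ℝ) : ℝ × ℝ := (a1 p, p.2)

noncomputable def energyOfActions (ℓ : ℕ) (a1 : ℝ × ℝ → ℝ) (q : ℝ × ℝ) : ℝ :=
  (Function.invFunOn (actionMap a1) (OmegaRegion ℓ) q).1

section ModifiedRadialAction

variable {a1 : ℝ × ℝ → ℝ} {E M : ℝ}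
  (hℓ : 0 < ℓ)
  (ha1anal : AnalyticOnNhd ℝ a1 (OmegaRegion ℓ))
  (ha1pos : ∀ p ∈ OmegaRegion ℓ, 0 < p.2 → a1 p = radialAction ℓ p.1 p.2)
  (ha1neg : ∀ p ∈ OmegaRegion ℓ, p.2 < 0 → a1 p = radialAction ℓ p.1 p.2 - p.2)

include ha1pos ha1neg in
theorem a1_eq (hp : (E, M) ∈ OmegaRegion ℓ) (hM : M ≠ 0) :
    a1 (E, M) = radialAction ℓ E M + max 0 (-M) := by
  rcases hM.lt_or_gt with hM | hM
  · rw [ha1neg _ hp hM, max_eq_right (by linarith)]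
    ring
  · rw [ha1pos _ hp hM, max_eq_left (by linarith), add_zero]

include ha1anal in
theorem continuousAt_a1_right (hp : (E, M) ∈ OmegaRegion ℓ) :
    ContinuousAt (fun M' => a1 (E, M')) M :=
  ContinuousAt.comp (g := a1) (ha1anal _ hp).continuousAt (Continuous.prodMk_right E).continuousAt

include ha1anal in
theorem continuousAt_a1_left (hp : (E, M) ∈ OmegaRegion ℓ) :
    ContinuousAt (fun E' => a1 (E', M)) E :=
  ContinuousAt.comp (g := a1) (ha1anal _ hp).continuousAt (Continuous.prodMk_left M).continuousAt

include hℓ in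
theorem eventually_ne_zero_and_Vmin_lt (h : Vmin ℓ M < E) :
    ∀ᶠ M' in 𝓝[≠] M, M' ≠ 0 ∧ Vmin ℓ M' < E := by
  refine Eventually.and ?_ (nhdsWithin_le_nhds
    ((continuous_Vmin hℓ).continuousAt.eventually_lt continuousAt_const h))
  rcases eq_or_ne M 0 with rfl | hM
  · exact self_mem_nhdsWithin
  · exact nhdsWithin_le_nhds (eventually_ne_nhds hM)

include hℓ ha1anal ha1pos ha1neg

theorem max_zero_neg_le_a1 (hp : (E, M) ∈ OmegaRegion ℓ) : max 0 (-M) ≤ a1 (E, M) := by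
  have h := (mem_omegaRegion_iff hℓ).mp hp
  refine le_of_eventually_nhdsNE (continuous_const.max continuous_neg).continuousAt
    (continuousAt_a1_right ha1anal hp) ?_
  filter_upwards [eventually_ne_zero_and_Vmin_lt hℓ h] with M' ⟨hM', h'⟩
  rw [a1_eq ha1pos ha1neg ((mem_omegaRegion_iff hℓ).mpr h') hM']
  linarith [radialAction_nonneg hℓ h']

theorem exists_a1_add_le (hp : (E, M) ∈ OmegaRegion ℓ) :
    ∃ w > 0, ∀ t, E ≤ t → a1 (E, M) + w * (√t - √E) ≤ a1 (t, M) := by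
  have h := (mem_omegaRegion_iff hℓ).mp hp
  obtain ⟨u, v, hu, huv, hwin⟩ := exists_Icc_eventually_Vstar_le hℓ h
  refine ⟨√2 / π * (v - u), by have := sub_pos.mpr huv; positivity, fun t hEt => ?_⟩
  have ht : (t, M) ∈ OmegaRegion ℓ := (mem_omegaRegion_iff hℓ).mpr (h.trans_le hEt)
  refine le_of_eventually_nhdsNE (f := fun M' => a1 (E, M') + √2 / π * (v - u) * (√t - √E))
    ((continuousAt_a1_right ha1anal hp).add continuousAt_const)
    (continuousAt_a1_right ha1anal ht) ?_
  filter_upwards [eventually_ne_zero_and_Vmin_lt hℓ h, nhdsWithin_le_nhds hwin]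
    with M' ⟨hM', h'⟩ hwin'
  rw [a1_eq ha1pos ha1neg ((mem_omegaRegion_iff hℓ).mpr h') hM',
    a1_eq ha1pos ha1neg ((mem_omegaRegion_iff hℓ).mpr (h'.trans_le hEt)) hM']
  linarith [radialAction_add_le hℓ hM' h' hEt hu huv.le hwin']

theorem a1_lt_a1_of_lt (hp : (E, M) ∈ OmegaRegion ℓ) {t : ℝ} (hEt : E < t) :
    a1 (E, M) < a1 (t, M) := by
  have hE : 0 ≤ E := (Vmin_nonneg M).trans ((mem_omegaRegion_iff hℓ).mp hp).le
  obtain ⟨w, hw, hgap⟩ := exists_a1_add_le hℓ ha1anal ha1pos ha1neg hp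
  have : 0 < w * (√t - √E) := mul_pos hw (sub_pos.mpr (Real.sqrt_lt_sqrt hE hEt))
  linarith [hgap t hEt.le]

theorem a1_le (hp : (E, M) ∈ OmegaRegion ℓ) :
    a1 (E, M) ≤ √2 / π * ((2 * ℓ * E) ^ (1 / (2 * (ℓ : ℝ))) * √(E - Vmin ℓ M)) + max 0 (-M) := by
  have h := (mem_omegaRegion_iff hℓ).mp hp
  have := continuous_Vmin hℓ
  refine le_of_eventually_nhdsNE (continuousAt_a1_right ha1anal hp)
    (g := fun M' => √2 / π * ((2 * ℓ * E) ^ (1 / (2 * (ℓ : ℝ))) * √(E - Vmin ℓ M')) + max 0 (-M'))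
    (by fun_prop) ?_
  filter_upwards [eventually_ne_zero_and_Vmin_lt hℓ h] with M' ⟨hM', h'⟩
  rw [a1_eq ha1pos ha1neg ((mem_omegaRegion_iff hℓ).mpr h') hM']
  linarith [radialAction_le hℓ hM' h']

omit ha1anal ha1pos ha1neg in
theorem scale_mem_omegaRegion {ρ : ℝ} (hρ : 0 < ρ) (hp : (E, M) ∈ OmegaRegion ℓ) :
    (ρ ^ (2 * ℓ) * E, ρ ^ (ℓ + 1) * M) ∈ OmegaRegion ℓ := by
  rw [mem_omegaRegion_iff hℓ] at hp ⊢
  rw [Vmin_scale hρ]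
  exact mul_lt_mul_of_pos_left hp (by positivity)

theorem a1_scale {ρ : ℝ} (hρ : 0 < ρ) (hp : (E, M) ∈ OmegaRegion ℓ) :
    a1 (ρ ^ (2 * ℓ) * E, ρ ^ (ℓ + 1) * M) = ρ ^ (ℓ + 1) * a1 (E, M) := by
  have h := (mem_omegaRegion_iff hℓ).mp hp
  have hf : ContinuousAt (fun M' => a1 (ρ ^ (2 * ℓ) * E, ρ ^ (ℓ + 1) * M')) M :=
    ContinuousAt.comp (g := a1) (ha1anal _ (scale_mem_omegaRegion hℓ hρ hp)).continuousAt
      (by fun_prop)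
  have hg : ContinuousAt (fun M' => ρ ^ (ℓ + 1) * a1 (E, M')) M :=
    continuousAt_const.mul (continuousAt_a1_right ha1anal hp)
  refine ((hf.eventuallyEq_nhds_iff_eventuallyEq_nhdsNE hg).mp ?_).eq_of_nhds
  filter_upwards [eventually_ne_zero_and_Vmin_lt hℓ h] with M' ⟨hM', h'⟩
  have hp' : (E, M') ∈ OmegaRegion ℓ := (mem_omegaRegion_iff hℓ).mpr h'
  rw [a1_eq ha1pos ha1neg (scale_mem_omegaRegion hℓ hρ hp') (by positivity),
    a1_eq ha1pos ha1neg hp' hM', radialAction_scale hℓ hρ, ← mul_neg, mul_add]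
  congr 1
  rw [mul_max_of_nonneg _ _ (by positivity), mul_zero]

theorem fderiv_a1_pos (hp : (E, M) ∈ OmegaRegion ℓ) : 0 < fderiv ℝ a1 (E, M) (1, 0) := by
  have hE : 0 < E := (Vmin_nonneg M).trans_lt ((mem_omegaRegion_iff hℓ).mp hp)
  obtain ⟨w, hw, hgap⟩ := exists_a1_add_le hℓ ha1anal ha1pos ha1neg hp
  have hderiv : HasDerivAt (fun s => a1 (s, M)) (fderiv ℝ a1 (E, M) (1, 0)) E :=
    (ha1anal _ hp).differentiableAt.hasFDerivAt.comp_hasDerivAt E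
      ((hasDerivAt_id E).prodMk (hasDerivAt_const E M))
  have hslope : Tendsto (slope (fun s => a1 (s, M)) E) (𝓝[>] E) (𝓝 (fderiv ℝ a1 (E, M) (1, 0))) :=
    hderiv.tendsto_slope.mono_left (nhdsWithin_mono E fun _ ht => ne_of_gt ht)
  have hbound : Tendsto (fun t => w / (√t + √E)) (𝓝[>] E) (𝓝 (w / (√E + √E))) := by
    have : ContinuousAt (fun t => w / (√t + √E)) E := by fun_prop (disch := positivity)
    exact this.tendsto.mono_left nhdsWithin_le_nhds
  refine lt_of_lt_of_le (by positivity) (le_of_tendsto_of_tendsto hbound hslope ?_)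
  filter_upwards [self_mem_nhdsWithin] with t (hEt : E < t)
  have hsq : t - E = (√t + √E) * (√t - √E) := by
    linear_combination sq_sqrt hE.le - sq_sqrt (hE.trans hEt).le
  have hpos : 0 < √t + √E := by positivity
  rw [slope_def_field, le_div_iff₀ (sub_pos.mpr hEt), hsq, ← mul_assoc,
    div_mul_cancel₀ _ hpos.ne']
  linarith [hgap t hEt.le]

theorem tendsto_a1_atTop (hp : (E, M) ∈ OmegaRegion ℓ) :
    Tendsto (fun t => a1 (t, M)) atTop atTop := by
  obtain ⟨w, hw, hgap⟩ := exists_a1_add_le hℓ ha1anal ha1pos ha1neg hp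
  refine tendsto_atTop_mono' _ ((eventually_ge_atTop E).mono hgap) ?_
  refine tendsto_atTop_add_const_left _ _ (Tendsto.const_mul_atTop hw ?_)
  simpa only [sub_eq_add_neg] using tendsto_atTop_add_const_right _ (-√E) tendsto_sqrt_atTop

theorem exists_a1_lt {x : ℝ} (hx : max 0 (-M) < x) : ∃ E, Vmin ℓ M < E ∧ a1 (E, M) < x := by
  set U := fun E => √2 / π * ((2 * ℓ * E) ^ (1 / (2 * (ℓ : ℝ))) * √(E - Vmin ℓ M)) + max 0 (-M)
  have hU : Continuous U := by
    have := Real.continuous_rpow_const (q := 1 / (2 * (ℓ : ℝ))) (by positivity)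
    fun_prop
  have hUx : U (Vmin ℓ M) < x := by simpa [U] using hx
  have hnear : ∀ᶠ E in 𝓝[>] Vmin ℓ M, U E < x :=
    nhdsWithin_le_nhds ((hU.tendsto _).eventually (gt_mem_nhds hUx))
  obtain ⟨E, hE, hEx⟩ := (eventually_mem_nhdsWithin.and hnear).exists
  have hp : (E, M) ∈ OmegaRegion ℓ := (mem_omegaRegion_iff hℓ).mpr hE
  exact ⟨E, hE, (a1_le hℓ ha1anal ha1pos ha1neg hp).trans_lt hEx⟩

theorem mapsTo_actionMap : MapsTo (actionMap a1) (OmegaRegion ℓ) openActionCone := by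
  rintro ⟨E, M⟩ hp
  have h : Vmin ℓ M < E := (mem_omegaRegion_iff hℓ).mp hp
  have hp' : ((Vmin ℓ M + E) / 2, M) ∈ OmegaRegion ℓ :=
    (mem_omegaRegion_iff hℓ).mpr (show Vmin ℓ M < (Vmin ℓ M + E) / 2 by linarith)
  exact (max_zero_neg_le_a1 hℓ ha1anal ha1pos ha1neg hp').trans_lt
    (a1_lt_a1_of_lt hℓ ha1anal ha1pos ha1neg hp' (by linarith))

theorem injOn_actionMap : InjOn (actionMap a1) (OmegaRegion ℓ) := by
  rintro ⟨E, M⟩ hp ⟨E', M'⟩ hp' heq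
  obtain ⟨ha1, rfl⟩ := Prod.mk.inj heq
  rcases lt_trichotomy E E' with hlt | rfl | hgt
  · exact absurd ha1 (a1_lt_a1_of_lt hℓ ha1anal ha1pos ha1neg hp hlt).ne
  · rfl
  · exact absurd ha1 (a1_lt_a1_of_lt hℓ ha1anal ha1pos ha1neg hp' hgt).ne'

theorem surjOn_actionMap : SurjOn (actionMap a1) (OmegaRegion ℓ) openActionCone := by
  rintro ⟨x, M⟩ (hx : max 0 (-M) < x)
  obtain ⟨E₀, hE₀, hlt⟩ := exists_a1_lt hℓ ha1anal ha1pos ha1neg hx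
  have hmem : ∀ E, E₀ ≤ E → (E, M) ∈ OmegaRegion ℓ := fun E hE =>
    (mem_omegaRegion_iff hℓ).mpr (hE₀.trans_le hE)
  obtain ⟨E₁, hgt, hE₁⟩ := (((tendsto_a1_atTop hℓ ha1anal ha1pos ha1neg (hmem E₀ le_rfl)).eventually
    (eventually_gt_atTop x)).and (eventually_ge_atTop E₀)).exists
  obtain ⟨E, hE, hEx⟩ := intermediate_value_Icc hE₁
    (fun E hE => (continuousAt_a1_left ha1anal (hmem E hE.1)).continuousWithinAt) ⟨hlt.le, hgt.le⟩
  exact ⟨(E, M), hmem E hE.1, Prod.ext hEx rfl⟩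

theorem energyOfActions_actionMap {p : ℝ × ℝ} (hp : p ∈ OmegaRegion ℓ) :
    energyOfActions ℓ a1 (actionMap a1 p) = p.1 := by
  rw [energyOfActions, (injOn_actionMap hℓ ha1anal ha1pos ha1neg).leftInvOn_invFunOn hp]

theorem exists_hasStrictFDerivAt_actionMap {E M : ℝ} (hp : (E, M) ∈ OmegaRegion ℓ) :
    ∃ e : (ℝ × ℝ) ≃L[ℝ] ℝ × ℝ,
      HasStrictFDerivAt (actionMap a1) (e : (ℝ × ℝ) →L[ℝ] ℝ × ℝ) (E, M) := by
  set D := (fderiv ℝ a1 (E, M)).prod (ContinuousLinearMap.snd ℝ ℝ ℝ)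
  have hD : HasStrictFDerivAt (actionMap a1) D (E, M) :=
    (ha1anal _ hp).hasStrictFDerivAt.prodMk hasStrictFDerivAt_snd
  have hinj : Function.Injective D := by
    refine (injective_iff_map_eq_zero D).mpr fun ⟨x, y⟩ hxy => ?_
    obtain ⟨hx, rfl⟩ := Prod.mk.inj hxy
    have hsmul : ((x, 0) : ℝ × ℝ) = x • (1, 0) := by simp
    rw [hsmul, map_smul, smul_eq_mul] at hx
    simpa [(fderiv_a1_pos hℓ ha1anal ha1pos ha1neg hp).ne'] using hx
  exact ⟨(LinearEquiv.ofInjectiveEndo (D : (ℝ × ℝ) →ₗ[ℝ] ℝ × ℝ) hinj).toContinuousLinearEquiv, hD⟩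

theorem analyticAt_energyOfActions {E M : ℝ} (hp : (E, M) ∈ OmegaRegion ℓ) :
    AnalyticAt ℝ (energyOfActions ℓ a1) (actionMap a1 (E, M)) := by
  obtain ⟨e, he⟩ := exists_hasStrictFDerivAt_actionMap hℓ ha1anal ha1pos ha1neg hp
  set Φ := he.toOpenPartialHomeomorph (actionMap a1)
  have hΦ : ⇑Φ = actionMap a1 := he.toOpenPartialHomeomorph_coe
  have hsource : (E, M) ∈ Φ.source := he.mem_toOpenPartialHomeomorph_source
  have hanalytic : AnalyticAt ℝ (actionMap a1) (E, M) := (ha1anal _ hp).prod analyticAt_snd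
  have hsymm : AnalyticAt ℝ Φ.symm (actionMap a1 (E, M)) := by
    rw [← hΦ] at hanalytic ⊢
    exact Φ.analyticAt_symm' hsource hanalytic (hΦ ▸ he.hasFDerivAt.fderiv)
  have htarget : actionMap a1 (E, M) ∈ Φ.target := hΦ ▸ Φ.map_source hsource
  have hnear : ∀ᶠ q in 𝓝 (actionMap a1 (E, M)), q ∈ Φ.target ∧ Φ.symm q ∈ OmegaRegion ℓ := by
    refine (Φ.open_target.eventually_mem htarget).and
      ((Φ.continuousAt_symm htarget).eventually_mem ?_)
    rw [← hΦ, Φ.left_inv hsource]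
    exact (isOpen_omegaRegion hℓ).mem_nhds hp
  refine (analyticAt_fst.comp hsymm).congr (hnear.mono fun q ⟨hq, hqΩ⟩ => ?_)
  have hinv : actionMap a1 (Φ.symm q) = q := hΦ ▸ Φ.right_inv hq
  simp only [Function.comp_apply]
  rw [← energyOfActions_actionMap hℓ ha1anal ha1pos ha1neg hqΩ, hinv]

theorem energyOfActions_smul {q : ℝ × ℝ} (hq : q ∈ openActionCone) {lam : ℝ} (hlam : 0 < lam) :
    energyOfActions ℓ a1 (lam • q) = lam ^ (2 * (ℓ : ℝ) / (ℓ + 1)) * energyOfActions ℓ a1 q := by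
  obtain ⟨⟨E, M⟩, hp, rfl⟩ := surjOn_actionMap hℓ ha1anal ha1pos ha1neg hq
  set ρ := lam ^ ((ℓ + 1 : ℕ) : ℝ)⁻¹
  have hρ : 0 < ρ := Real.rpow_pos_of_pos hlam _
  have hlamρ : lam = ρ ^ (ℓ + 1) := (Real.rpow_inv_natCast_pow hlam.le (Nat.succ_ne_zero ℓ)).symm
  have hpow : lam ^ (2 * (ℓ : ℝ) / (ℓ + 1)) = ρ ^ (2 * ℓ) := by
    rw [hlamρ, ← Real.rpow_natCast, ← Real.rpow_natCast, ← Real.rpow_mul hρ.le]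
    push_cast
    field_simp
  have hscale : lam • actionMap a1 (E, M) = actionMap a1 (ρ ^ (2 * ℓ) * E, ρ ^ (ℓ + 1) * M) := by
    rw [actionMap, actionMap, a1_scale hℓ ha1anal ha1pos ha1neg hρ hp, Prod.smul_mk, hlamρ]
    rfl
  rw [hscale, hpow, energyOfActions_actionMap hℓ ha1anal ha1pos ha1neg hp,
    energyOfActions_actionMap hℓ ha1anal ha1pos ha1neg (scale_mem_omegaRegion hℓ hρ hp)]

end ModifiedRadialAction

end AnharmonicOscillator

/-- The anharmonic oscillator Hamiltonian, written in the action variables `(a₁, a₂)`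
(the modified radial action and the angular momentum), is a real analytic function on the
interior of the cone `𝒞`, homogeneous of degree `2ℓ/(ℓ+1)` there; this function `h`
inverts the modified radial action: `h(a₁(E, M), M) = E` on `Ω`. -/
theorem hamiltonian_in_action_variables (ℓ : ℕ) (hℓ : 1 ≤ ℓ)
    (a1 : ℝ × ℝ → ℝ)
    (ha1anal : AnalyticOnNhd ℝ a1 (OmegaRegion ℓ))
    (ha1pos : ∀ p ∈ OmegaRegion ℓ, 0 < p.2 → a1 p = radialAction ℓ p.1 p.2)
    (ha1neg : ∀ p ∈ OmegaRegion ℓ, p.2 < 0 → a1 p = radialAction ℓ p.1 p.2 - p.2) :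
    (∀ p ∈ OmegaRegion ℓ, (a1 p, p.2) ∈ interior actionCone) ∧
    ∃ h : ℝ × ℝ → ℝ,
      AnalyticOnNhd ℝ h (interior actionCone) ∧
      (∀ a ∈ interior actionCone, ∀ lam : ℝ, 0 < lam →
        h (lam • a) = lam ^ ((2 * (ℓ : ℝ)) / (ℓ + 1)) * h a) ∧
      (∀ p ∈ OmegaRegion ℓ, h (a1 p, p.2) = p.1) := by
  open AnharmonicOscillator in
  rw [interior_actionCone]
  refine ⟨fun p hp => mapsTo_actionMap hℓ ha1anal ha1pos ha1neg hp, energyOfActions ℓ a1,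
    fun q hq => ?_, fun q hq lam hlam => energyOfActions_smul hℓ ha1anal ha1pos ha1neg hq hlam,
    fun p hp => energyOfActions_actionMap hℓ ha1anal ha1pos ha1neg hp⟩
  obtain ⟨⟨E, M⟩, hp, rfl⟩ := surjOn_actionMap hℓ ha1anal ha1pos ha1neg hq
  exact analyticAt_energyOfActions hℓ ha1anal ha1pos ha1neg hp
end
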